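/- Let R be a ring and M an Artinian R-module that is strongly virtually regular. Then M is semisimple. -/

import Mathlib

/-!
The socle `S` (the sum of all simple submodules) of an Artinian module is semisimple and Artinian,
hence finitely generated, so `S` is isomorphic to a direct summand `N`. Being semisimple, `N` lies
in `S`, and an Artinian module is not isomorphic to a proper submodule of itself, so `N = S`.
A complement of `S` meets `S` trivially, so it contains no simple submodule and is therefore zero
by the descending chain condition. Hence `M = S` is semisimple.
-/

/-- A submodule is a direct summand if it has a complement. -/
def Submodule.IsDirectSummand {R M : Type*} [Ring R] [AddCommGroup M] [Module R M]
    (N : Submodule R M) : Prop :=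
  ∃ N' : Submodule R M, IsCompl N N'

/-- A module is strongly virtually regular if every finitely generated submodule is
isomorphic to a direct summand. -/
def StronglyVirtuallyRegular (R M : Type*) [Ring R] [AddCommGroup M] [Module R M] : Prop :=
  ∀ A : Submodule R M, A.FG → ∃ N : Submodule R M, N.IsDirectSummand ∧
    Nonempty (A ≃ₗ[R] N)

theorem Submodule.eq_of_le_of_linearEquiv {R M : Type*} [Ring R] [AddCommGroup M] [Module R M]
    {P Q : Submodule R M} [IsArtinian R Q] (hle : P ≤ Q) (e : Q ≃ₗ[R] P) : P = Q := by
  have hsurj := IsArtinian.surjective_of_injective_endomorphism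
    (Submodule.inclusion hle ∘ₗ e.toLinearMap)
    ((Submodule.inclusion_injective hle).comp e.injective)
  refine hle.antisymm fun x hx => ?_
  obtain ⟨y, hy⟩ := hsurj ⟨x, hx⟩
  have hyx : (e y : M) = x := congrArg Subtype.val hy
  exact hyx ▸ (e y).2

namespace Module

variable (R M : Type*) [Ring R] [AddCommGroup M] [Module R M]

def socle : Submodule R M := sSup {m : Submodule R M | IsSimpleModule R m}

instance isSemisimpleModule_socle : IsSemisimpleModule R (socle R M) := by
  rw [socle, sSup_eq_iSup]
  exact isSemisimpleModule_biSup_of_isSemisimpleModule_submodule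
    fun m hm => have : IsSimpleModule R m := hm; inferInstance

theorem socle_fg [IsArtinian R M] : (socle R M).FG := by
  rw [← Module.Finite.iff_fg]
  exact (IsSemisimpleModule.finite_tfae.out 2 0).mp (isArtinian_submodule' (socle R M))

variable {R M}

theorem le_socle_of_isSemisimpleModule (N : Submodule R M) [IsSemisimpleModule R N] :
    N ≤ socle R M := by
  rw [← Submodule.map_subtype_top N, ← IsSemisimpleModule.sSup_simples_eq_top R N,
    (Submodule.gc_map_comap N.subtype).l_sSup]
  refine iSup₂_le fun m (hm : IsSimpleModule R m) => le_sSup ?_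
  exact IsSimpleModule.congr (m.equivMapOfInjective N.subtype N.injective_subtype).symm

theorem eq_bot_of_disjoint_socle [IsAtomic (Submodule R M)] {N : Submodule R M}
    (h : Disjoint (socle R M) N) : N = ⊥ := by
  refine (eq_bot_or_exists_atom_le N).resolve_right fun ⟨U, hU, hUN⟩ => hU.1 ?_
  have hUS : U ≤ socle R M := le_sSup (isSimpleModule_iff_isAtom.mpr hU)
  exact (h.mono_left hUS).eq_bot_of_le hUN

theorem isSemisimpleModule_of_isCompl_socle [IsAtomic (Submodule R M)] {N : Submodule R M}
    (h : IsCompl (socle R M) N) : IsSemisimpleModule R M := by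
  have hN : N = ⊥ := eq_bot_of_disjoint_socle h.disjoint
  exact .of_sSup_simples_eq_top (codisjoint_bot.mp (hN ▸ h.codisjoint))

end Module

/-- An Artinian strongly virtually regular module is semisimple. -/
theorem semisimple_of_artinian_stronglyVirtuallyRegular {R M : Type*} [Ring R]
    [AddCommGroup M] [Module R M] [IsArtinian R M]
    (h : StronglyVirtuallyRegular R M) : IsSemisimpleModule R M := by
  obtain ⟨N, ⟨N', hcompl⟩, ⟨e⟩⟩ := h (Module.socle R M) (Module.socle_fg R M)
  have : IsSemisimpleModule R N := .congr e.symm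
  have hN : N = Module.socle R M :=
    Submodule.eq_of_le_of_linearEquiv (Module.le_socle_of_isSemisimpleModule N) e
  exact Module.isSemisimpleModule_of_isCompl_socle (hN ▸ hcompl)
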